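/- Vandermonde-type summation: for a nonnegative integer j, parameters α, β, b with b = β - 1 (so β = b+1) and α = a+b+j+2 in the original setting, and any complex γ, one has ∑_{m=0}^{j} ((-j)_m / m!) ₁F₁(β+m; α; γ) = ((-1)^j γ^j / (α)_j) ₁F₁(β+j; α+j; γ), valid whenever the series converge and α avoids nonpositive integers. -/

import Mathlib

open Complex Finset

/-- Pochhammer symbol `(a)_n` for complex `a`. -/
noncomputable def poch (a : ℂ) (n : ℕ) : ℂ := ∏ i ∈ Finset.range n, (a + i)

/-- Confluent hypergeometric function `₁F₁(a; b; x)`. -/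
noncomputable def F11 (a b x : ℂ) : ℂ :=
  ∑' k : ℕ, poch a k * x ^ k / (poch b k * k.factorial)

/-- Gauss hypergeometric function `₂F₁(a, b; c; x)`. -/
noncomputable def F21 (a b c x : ℂ) : ℂ :=
  ∑' k : ℕ, poch a k * poch b k * x ^ k / (poch c k * k.factorial)

/-- Generalized Laguerre polynomial `L_n^{(α)}(x)`. -/
noncomputable def laguerre (n : ℕ) (α x : ℂ) : ℂ :=
  poch (α + 1) n / n.factorial * F11 (-(n : ℂ)) (α + 1) x


/-!
Since `(-j)_m / m! = (-1)^m C(j, m)`, exchanging the finite sum with the series turns the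
coefficient of `γ^k / ((α)_k k!)` into `(-1)^j` times the `j`-th forward difference of
`x ↦ (x)_k` at `β`. As `Δ (x)_k = k (x+1)_{k-1}`, this difference is
`k (k-1) ⋯ (k-j+1) (β+j)_{k-j}`; it vanishes for `k < j`, and shifting `k = n + j` together
with `(α)_{n+j} = (α)_j (α+j)_n` and `(n+j)! = (n+j)(n+j-1) ⋯ (n+1) n!` gives the right side.
-/

open Filter Topology
open scoped fwdDiff

lemma poch_succ (a : ℂ) (n : ℕ) : poch a (n + 1) = poch a n * (a + n) :=
  prod_range_succ _ _

lemma poch_succ' (a : ℂ) (n : ℕ) : poch a (n + 1) = a * poch (a + 1) n := by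
  unfold poch
  rw [Finset.prod_range_succ', Nat.cast_zero, add_zero, mul_comm]
  congr 1
  refine prod_congr rfl fun i _ ↦ ?_
  push_cast; ring

lemma poch_add (a : ℂ) (m n : ℕ) : poch a (m + n) = poch a m * poch (a + m) n := by
  unfold poch
  rw [Finset.prod_range_add]
  congr 1
  refine prod_congr rfl fun i _ ↦ ?_
  push_cast; ring

lemma poch_ne_zero {a : ℂ} (h : ∀ i : ℕ, a + i ≠ 0) (n : ℕ) : poch a n ≠ 0 :=
  prod_ne_zero_iff.mpr fun i _ ↦ h i

lemma poch_eq_ascPochhammer_eval (a : ℂ) (n : ℕ) : poch a n = (ascPochhammer ℂ n).eval a := by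
  induction n with
  | zero => simp [poch]
  | succ n ih => rw [poch_succ, ascPochhammer_succ_eval, ih]

lemma poch_neg_natCast (j m : ℕ) : poch (-(j : ℂ)) m = (-1) ^ m * (j.descFactorial m : ℂ) := by
  rw [poch_eq_ascPochhammer_eval, ascPochhammer_eval_neg_eq_descPochhammer,
    descPochhammer_eval_eq_descFactorial]

lemma poch_neg_natCast_div_factorial (j m : ℕ) :
    poch (-(j : ℂ)) m / m.factorial = (-1) ^ m * (j.choose m : ℂ) := by
  rw [poch_neg_natCast, Nat.descFactorial_eq_factorial_mul_choose, Nat.cast_mul,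
    mul_div_assoc, mul_div_cancel_left₀ _ (Nat.cast_ne_zero.mpr m.factorial_ne_zero)]

lemma poch_add_one_sub (x : ℂ) (n : ℕ) :
    poch (x + 1) n - poch x n = n * poch (x + 1) (n - 1) := by
  cases n with
  | zero => simp [poch]
  | succ n => rw [poch_succ, poch_succ', Nat.add_sub_cancel]; push_cast; ring

lemma fwdDiff_iter_poch (j k : ℕ) :
    (Δ_[1])^[j] (fun x : ℂ ↦ poch x k)
      = fun x ↦ (k.descFactorial j : ℂ) * poch (x + j) (k - j) := by
  induction j with
  | zero => simp
  | succ j ih =>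
    ext x
    rw [Function.iterate_succ_apply', ih, fwdDiff, Nat.descFactorial_succ, Nat.cast_mul,
      ← Nat.sub_sub, ← mul_sub, add_right_comm x 1, poch_add_one_sub, Nat.cast_succ, ← add_assoc]
    ring

lemma sum_neg_one_pow_mul_choose_mul_poch (j k : ℕ) (β : ℂ) :
    ∑ m ∈ range (j + 1), (-1) ^ m * (j.choose m : ℂ) * poch (β + m) k
      = (-1) ^ j * (k.descFactorial j : ℂ) * poch (β + j) (k - j) := by
  have h := congrFun (fwdDiff_iter_poch j k) β
  rw [fwdDiff_iter_eq_sum_shift] at h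
  rw [mul_assoc, ← h, mul_sum]
  refine sum_congr rfl fun m hm ↦ ?_
  have hmj : m ≤ j := Nat.lt_succ_iff.mp (mem_range.mp hm)
  have hsq : ((-1 : ℂ) ^ (j - m)) * (-1) ^ (j - m) = 1 := by rw [← mul_pow]; norm_num
  rw [zsmul_eq_mul, nsmul_one, ← pow_sub_mul_pow (-1 : ℂ) hmj]
  push_cast
  linear_combination (-((-1 : ℂ) ^ m * j.choose m * poch (β + m) k)) * hsq

lemma summable_F11_term (a : ℂ) {b : ℂ} (γ : ℂ) (hb : ∀ i : ℕ, b + i ≠ 0) :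
    Summable fun k : ℕ ↦ poch a k * γ ^ k / (poch b k * k.factorial) := by
  set t := fun k : ℕ ↦ poch a k * γ ^ k / (poch b k * k.factorial)
  have hratio : ∀ k : ℕ, t (k + 1) = t k * ((a + k) / (b + k) * (γ / (k + 1))) := by
    intro k
    have := poch_ne_zero hb k
    have := hb k
    simp only [t, poch_succ, pow_succ, Nat.factorial_succ]
    push_cast
    field_simp
  have hlim : Tendsto (fun k : ℕ ↦ (a + k) / (b + k) * (γ / (k + 1))) atTop (𝓝 0) := by
    have h1 := tendsto_add_mul_div_add_mul_atTop_nhds a b 1 one_ne_zero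
    have h2 := tendsto_add_mul_div_add_mul_atTop_nhds γ 1 0 one_ne_zero
    simpa [add_comm] using h1.mul h2
  refine summable_of_ratio_norm_eventually_le (r := 1 / 2) (by norm_num) ?_
  filter_upwards [(tendsto_zero_iff_norm_tendsto_zero.mp hlim).eventually
    (gt_mem_nhds (by norm_num : (0 : ℝ) < 1 / 2))] with k hk
  rw [hratio, norm_mul, mul_comm]
  gcongr

lemma tsum_descFactorial_mul (j : ℕ) (f : ℕ → ℂ) :
    ∑' k, (k.descFactorial j : ℂ) * f k = ∑' n, ((n + j).descFactorial j : ℂ) * f (n + j) := by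
  refine ((add_left_injective j).tsum_eq fun k hk ↦ ⟨k - j, Nat.sub_add_cancel ?_⟩).symm
  by_contra hkj
  simp [Nat.descFactorial_eq_zero_iff_lt.mpr (not_le.mp hkj)] at hk

lemma tsum_descFactorial_mul_F11_term {α : ℂ} (hα : ∀ i : ℕ, α + i ≠ 0) (j : ℕ) (b γ : ℂ) :
    ∑' k, (k.descFactorial j : ℂ) * (poch b (k - j) * γ ^ k / (poch α k * k.factorial))
      = γ ^ j / poch α j * F11 b (α + j) γ := by
  rw [tsum_descFactorial_mul, F11, ← tsum_mul_left]
  refine tsum_congr fun n ↦ ?_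
  have hfac : ((n + j).descFactorial j : ℂ) * n.factorial = (n + j).factorial := by
    rw [← Nat.cast_mul, ← Nat.factorial_mul_descFactorial (Nat.le_add_left j n),
      Nat.add_sub_cancel, mul_comm]
  have := poch_ne_zero hα j
  have := poch_ne_zero (a := α + j) (fun i ↦ by rw [add_assoc, ← Nat.cast_add]; exact hα _) n
  have := Nat.cast_ne_zero (R := ℂ) |>.mpr n.factorial_ne_zero
  rw [add_comm n j, poch_add, Nat.add_sub_cancel_left, pow_add, add_comm j n, ← hfac]
  field_simp

/-- Vandermonde-type summation for confluent hypergeometric functions: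
`∑_{m=0}^{j} ((-j)_m / m!) ₁F₁(β+m; α; γ) = ((-1)^j γ^j / (α)_j) ₁F₁(β+j; α+j; γ)`. -/
theorem vandermonde_confluent_sum (j : ℕ) (α β γ : ℂ) (hα : ∀ m : ℕ, α ≠ -(m : ℂ)) :
    ∑ m ∈ Finset.range (j + 1), poch (-(j : ℂ)) m / m.factorial * F11 (β + m) α γ
      = (-1) ^ j * γ ^ j / poch α j * F11 (β + j) (α + j) γ := by
  have hα' : ∀ i : ℕ, α + i ≠ 0 := fun i h ↦ hα i (eq_neg_of_add_eq_zero_left h)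
  calc ∑ m ∈ range (j + 1), poch (-(j : ℂ)) m / m.factorial * F11 (β + m) α γ
      = ∑ m ∈ range (j + 1), ∑' k, (-1) ^ m * (j.choose m : ℂ) *
          (poch (β + m) k * γ ^ k / (poch α k * k.factorial)) := by
        simp only [poch_neg_natCast_div_factorial, F11, tsum_mul_left]
    _ = ∑' k, ∑ m ∈ range (j + 1), (-1) ^ m * (j.choose m : ℂ) *
          (poch (β + m) k * γ ^ k / (poch α k * k.factorial)) :=
        (Summable.tsum_finsetSum fun m _ ↦ (summable_F11_term _ _ hα').mul_left _).symm
    _ = (-1) ^ j * ∑' k, (k.descFactorial j : ℂ) *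
          (poch (β + j) (k - j) * γ ^ k / (poch α k * k.factorial)) := by
        rw [← tsum_mul_left]
        refine tsum_congr fun k ↦ ?_
        simp only [mul_div_assoc, ← mul_assoc, ← sum_mul, sum_neg_one_pow_mul_choose_mul_poch]
    _ = (-1) ^ j * γ ^ j / poch α j * F11 (β + j) (α + j) γ := by
        rw [tsum_descFactorial_mul_F11_term hα', mul_div_assoc, mul_assoc]
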